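/- Efficiency upper bound for asymmetric key consensus: Let (Con, Rec) be a correct and secure AKC scheme with parameters (q, m, g, d), m ≥ 2: correctness means for all σ₁, σ₂ ∈ ℤ_q with |σ₁ − σ₂|_q ≤ d and any k₁ ∈ ℤ_m, Rec(σ₂, Con(σ₁, k₁)) = k₁; security means for σ₁ uniform over ℤ_q, the distribution of Con(σ₁, k₁) does not depend on k₁. Then 2·m·d ≤ q·(1 − m/g). -/

import Mathlib

/-!
For a signal `v` and a key `k`, let `A(v,k)` be the set of `σ₁` from which `Con` can emit `v`
for `k`, and `B(v,k)` the set of `σ₂` that `Rec` decodes to `k` from `v`. Correctness puts the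
whole `d`-neighbourhood of `A(v,k)` inside `B(v,k)`, and a nonempty subset of `ℤ_q` has a
`d`-neighbourhood with at least `min(q, |A(v,k)| + 2d)` elements. For fixed `v` the sets `B(v,k)`
partition `ℤ_q`, and by security the `A(v,k)` are either all empty or all nonempty; since
`m ≥ 2`, every signal `v` in the support thus satisfies `∑ₖ |A(v,k)| + 2dm ≤ q`. Summing over the
`G ≤ g` such signals, and using that for each `k` the sets `A(·,k)` cover `ℤ_q`, gives
`mq + 2dmG ≤ Gq`, which rearranges to the bound.
-/

open Finset

open scoped Pointwise

namespace ZMod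

variable {q : ℕ} [NeZero q]

theorem eq_univ_of_add_one_mem {S : Finset (ZMod q)} {a : ZMod q} (ha : a ∈ S)
    (hS : ∀ x ∈ S, x + 1 ∈ S) : S = univ := by
  have hmem : ∀ n : ℕ, a + n ∈ S := by
    intro n
    induction n with
    | zero => simpa using ha
    | succ n ih => simpa [add_assoc] using hS _ ih
  refine eq_univ_of_forall fun y => ?_
  simpa using hmem (y - a).val

theorem card_lt_card_union_image_add_one {S : Finset (ZMod q)} (hS : S.Nonempty)
    (hlt : #S < q) : #S < #(S ∪ S.image (· + 1)) := by
  obtain ⟨a, ha⟩ := hS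
  refine card_lt_card (Finset.ssubset_iff_subset_ne.mpr ⟨subset_union_left, fun hEq => ?_⟩)
  have hclosed : ∀ x ∈ S, x + 1 ∈ S := fun x hx =>
    hEq ▸ mem_union_right _ (mem_image_of_mem _ hx)
  have := congrArg Finset.card (eq_univ_of_add_one_mem ha hclosed)
  rw [card_univ, ZMod.card] at this
  omega

theorem min_le_card_add_image_range {S : Finset (ZMod q)} (hS : S.Nonempty) (c : ZMod q)
    (t : ℕ) : min q (#S + t) ≤ #(S + (range (t + 1)).image fun i : ℕ => c + i) := by
  induction t with
  | zero => simp
  | succ t ih =>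
    set T := S + (range (t + 1)).image fun i : ℕ => c + i with hTdef
    have hsub : T ∪ T.image (· + 1) ⊆ S + (range (t + 1 + 1)).image fun i : ℕ => c + i := by
      intro x hx
      simp only [hTdef, mem_union, mem_image, mem_add, mem_range] at hx ⊢
      rcases hx with
        ⟨a, ha, _, ⟨i, hi, rfl⟩, rfl⟩ | ⟨_, ⟨a, ha, _, ⟨i, hi, rfl⟩, rfl⟩, rfl⟩
      · exact ⟨a, ha, _, ⟨i, by omega, rfl⟩, rfl⟩
      · exact ⟨a, ha, _, ⟨i + 1, by omega, rfl⟩, by push_cast; ring⟩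
    have hT : T ⊆ T ∪ T.image (· + 1) := subset_union_left
    have hTq : #T ≤ q := by simpa using card_le_univ T
    rcases lt_or_ge #T q with hlt | hge
    · have := card_lt_card_union_image_add_one (S := T) (hS.add (by simp)) hlt
      have := card_le_card hsub
      omega
    · have := card_le_card (hT.trans hsub)
      omega

end ZMod

def cyclicDist (q a b : ℕ) : ℤ := min (((a : ℤ) - b) % q) (q - ((a : ℤ) - b) % q)

theorem cyclicDist_le_abs_of_modEq {q a b : ℕ} {j : ℤ} (h : (a : ℤ) - b ≡ j [ZMOD q]) :
    cyclicDist q a b ≤ |j| := by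
  unfold cyclicDist
  rw [h]
  rcases Nat.eq_zero_or_pos q with rfl | hq
  · simp only [Nat.cast_zero, Int.emod_zero, zero_sub]
    exact min_le_of_left_le (le_abs_self j)
  have hq' : (0 : ℤ) < q := by exact_mod_cast hq
  have hdiv := Int.emod_add_mul_ediv j q
  rcases le_or_gt 0 j with hj | hj
  · have : 0 ≤ j / q := Int.ediv_nonneg hj hq'.le
    exact min_le_of_left_le (by rw [abs_of_nonneg hj]; nlinarith)
  · have : j / q < 0 := Int.ediv_neg_of_neg_of_pos hj hq'
    exact min_le_of_right_le (by rw [abs_of_neg hj]; nlinarith)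

theorem ZMod.cyclicDist_val_le {q : ℕ} [NeZero q] {x y : ZMod q} {j : ℤ} (h : x - y = j) :
    cyclicDist q x.val y.val ≤ |j| := by
  apply cyclicDist_le_abs_of_modEq
  rw [← ZMod.intCast_eq_intCast_iff]
  push_cast
  simpa using h

theorem Fintype.sum_le_of_sum_min_le {ι : Type*} [Fintype ι] [Nontrivial ι] {f : ι → ℕ}
    {q : ℕ} (hq : 0 < q) (hf : ∀ i, 0 < f i) (h : ∑ i, min q (f i) ≤ q) :
    ∑ i, f i ≤ q := by
  classical
  have hlt : ∀ i, f i < q := by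
    intro i
    obtain ⟨j, hji⟩ := exists_ne i
    have hpair : min q (f i) + min q (f j) ≤ ∑ i, min q (f i) := by
      rw [← sum_pair (f := fun i => min q (f i)) hji.symm]
      exact sum_le_sum_of_subset (subset_univ _)
    have := hf j
    omega
  calc ∑ i, f i = ∑ i, min q (f i) :=
        Fintype.sum_congr _ _ fun i => (min_eq_right (hlt i).le).symm
    _ ≤ q := h

namespace AKC

variable {q m g : ℕ} [NeZero q] {R : Type} [Fintype R]

-- `ℤ_q` is modelled by `ZMod q`, where the cyclic arithmetic lives; the scheme's inputs are
-- indexed by `Fin q`.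
def toFin (x : ZMod q) : Fin q := ⟨x.val, x.val_lt⟩

theorem toFin_natCast_val (σ : Fin q) : toFin (σ.val : ZMod q) = σ :=
  Fin.ext (ZMod.val_cast_of_lt σ.isLt)

variable (Con : Fin q → Fin m → R → Fin g) (Rec : Fin q → Fin g → Fin m)

def signalRegion (v : Fin g) (k : Fin m) : Finset (ZMod q) :=
  {x | ∃ r, Con (toFin x) k r = v}

def decodeRegion (v : Fin g) (k : Fin m) : Finset (ZMod q) :=
  {x | Rec (toFin x) v = k}

theorem sum_card_decodeRegion (v : Fin g) : ∑ k, #(decodeRegion Rec v k) = q := by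
  unfold decodeRegion
  rw [← card_eq_sum_card_fiberwise (s := univ) (t := univ) (fun _ _ => mem_coe.mpr (mem_univ _)),
    card_univ, ZMod.card]

theorem le_sum_card_signalRegion [Nonempty R] (k : Fin m) :
    q ≤ ∑ v, #(signalRegion Con v k) := by
  let r₀ : R := Classical.arbitrary R
  calc q = #(univ : Finset (ZMod q)) := by rw [card_univ, ZMod.card]
    _ = ∑ v, #{x | Con (toFin x) k r₀ = v} :=
      card_eq_sum_card_fiberwise fun _ _ => mem_coe.mpr (mem_univ _)
    _ ≤ ∑ v, #(signalRegion Con v k) := sum_le_sum fun v _ => card_le_card fun x hx => by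
      simp only [signalRegion, mem_filter, mem_univ, true_and] at hx ⊢
      exact ⟨r₀, hx⟩

theorem signalRegion_nonempty_iff (v : Fin g) (k : Fin m) :
    (signalRegion Con v k).Nonempty ↔
      ({p : Fin q × R | Con p.1 k p.2 = v} : Finset _).Nonempty := by
  simp only [signalRegion, filter_nonempty_iff, mem_univ, true_and, Prod.exists]
  constructor
  · rintro ⟨x, r, hr⟩
    exact ⟨_, r, hr⟩
  · rintro ⟨σ, r, hr⟩
    exact ⟨σ.val, r, by rwa [toFin_natCast_val]⟩

def IsCorrect (d : ℕ) : Prop :=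
  ∀ (σ₁ σ₂ : Fin q) (k : Fin m) (r : R),
    cyclicDist q σ₁.val σ₂.val ≤ d → Rec σ₂ (Con σ₁ k r) = k

variable {Con Rec} {d : ℕ}

theorem add_image_range_subset_decodeRegion (hcorrect : IsCorrect Con Rec d) (v : Fin g)
    (k : Fin m) :
    signalRegion Con v k + (range (2 * d + 1)).image (fun i : ℕ => -(d : ZMod q) + i) ⊆
      decodeRegion Rec v k := by
  intro x hx
  simp only [signalRegion, decodeRegion, mem_add, mem_filter, mem_univ, true_and, mem_image,
    mem_range] at hx ⊢
  obtain ⟨a, ⟨r, rfl⟩, _, ⟨i, hi, rfl⟩, rfl⟩ := hx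
  apply hcorrect
  have hdist := ZMod.cyclicDist_val_le (x := a) (y := a + (-(d : ZMod q) + i)) (j := d - i)
    (by push_cast; ring)
  exact hdist.trans (abs_le.mpr ⟨by omega, by omega⟩)

theorem min_le_card_decodeRegion (hcorrect : IsCorrect Con Rec d) {v : Fin g} {k : Fin m}
    (hne : (signalRegion Con v k).Nonempty) :
    min q (#(signalRegion Con v k) + 2 * d) ≤ #(decodeRegion Rec v k) :=
  (ZMod.min_le_card_add_image_range hne _ _).trans
    (card_le_card (add_image_range_subset_decodeRegion hcorrect v k))

theorem sum_card_signalRegion_add_le [Nontrivial (Fin m)] (hcorrect : IsCorrect Con Rec d)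
    {v : Fin g} (hne : ∀ k, (signalRegion Con v k).Nonempty) :
    ∑ k, #(signalRegion Con v k) + 2 * d * m ≤ q := by
  have hpack : ∑ k, (#(signalRegion Con v k) + 2 * d) ≤ q := by
    refine Fintype.sum_le_of_sum_min_le (NeZero.pos q)
      (fun k => by have := (hne k).card_pos; omega) ?_
    calc ∑ k, min q (#(signalRegion Con v k) + 2 * d) ≤ ∑ k, #(decodeRegion Rec v k) :=
          sum_le_sum fun k _ => min_le_card_decodeRegion hcorrect (hne k)
      _ = q := sum_card_decodeRegion Rec v
  simpa [sum_add_distrib, mul_comm] using hpack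

theorem mul_add_le_card_mul [Nonempty R] [Nontrivial (Fin m)] (hcorrect : IsCorrect Con Rec d)
    (hsecure : ∀ v k k', (signalRegion Con v k).Nonempty → (signalRegion Con v k').Nonempty)
    (k₀ : Fin m) :
    m * q + 2 * d * m * #{v | (signalRegion Con v k₀).Nonempty} ≤
      #{v | (signalRegion Con v k₀).Nonempty} * q := by
  set G : Finset (Fin g) := {v | (signalRegion Con v k₀).Nonempty}
  have hcover : m * q ≤ ∑ v ∈ G, ∑ k, #(signalRegion Con v k) := by
    have hempty : ∀ v ∉ G, ∀ k, signalRegion Con v k = ∅ := fun v hv k =>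
      not_nonempty_iff_eq_empty.mp fun hne =>
        hv (mem_filter.mpr ⟨mem_univ v, hsecure v k k₀ hne⟩)
    calc m * q = ∑ _k : Fin m, q := by simp
      _ ≤ ∑ k, ∑ v, #(signalRegion Con v k) :=
          sum_le_sum fun k _ => le_sum_card_signalRegion Con k
      _ = ∑ v, ∑ k, #(signalRegion Con v k) := sum_comm
      _ = ∑ v ∈ G, ∑ k, #(signalRegion Con v k) := (sum_subset (subset_univ G)
          fun v _ hv => sum_eq_zero fun k _ => by simp [hempty v hv k]).symm
  have hpack : ∑ v ∈ G, (∑ k, #(signalRegion Con v k) + 2 * d * m) ≤ ∑ _v ∈ G, q :=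
    sum_le_sum fun v hv => sum_card_signalRegion_add_le hcorrect fun k =>
      hsecure v k₀ k (mem_filter.mp hv).2
  rw [sum_add_distrib, sum_const, sum_const, smul_eq_mul, smul_eq_mul] at hpack
  linarith

end AKC

theorem two_mul_mul_le_mul_one_sub_div {q m g d G : ℕ} (hmq : 0 < m * q) (hG : G ≤ g)
    (h : m * q + 2 * d * m * G ≤ G * q) : (2 * m * d : ℝ) ≤ q * (1 - m / g) := by
  have hlt : 2 * d * m < q := by
    by_contra! hge
    have : G * q ≤ 2 * d * m * G := by nlinarith
    omega
  have hGpos : 0 < G := Nat.pos_of_ne_zero fun hG0 => by subst hG0; omega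
  have hg : (0 : ℝ) < g := by exact_mod_cast hGpos.trans_le hG
  have hR : (m * q + 2 * d * m * G : ℝ) ≤ G * q := by exact_mod_cast h
  have hGR : (G : ℝ) ≤ g := by exact_mod_cast hG
  have hltR : (2 * d * m : ℝ) < q := by exact_mod_cast hlt
  have hfin : (m * q + 2 * d * m * g : ℝ) ≤ g * q := by
    nlinarith [mul_nonneg (sub_nonneg.mpr hGR) (sub_nonneg.mpr hltR.le)]
  rw [show (q : ℝ) * (1 - m / g) = (g * q - m * q) / g by field_simp, le_div_iff₀ hg]
  linarith

theorem stmt_13_general (q m g d : ℕ) (hm : 2 ≤ m) (hmq : m ≤ q)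
    (R : Type) [Fintype R] [Nonempty R]
    (Con : Fin q → Fin m → R → Fin g) (Rec : Fin q → Fin g → Fin m)
    (hcorrect : ∀ (σ₁ σ₂ : Fin q) (k : Fin m) (r : R),
      min (((σ₁.val : ℤ) - (σ₂.val : ℤ)) % (q : ℤ))
          ((q : ℤ) - ((σ₁.val : ℤ) - (σ₂.val : ℤ)) % (q : ℤ)) ≤ (d : ℤ) →
      Rec σ₂ (Con σ₁ k r) = k)
    (hsec : ∀ (v : Fin g) (k k' : Fin m),
      ((Finset.univ : Finset (Fin q × R)).filter
        (fun p => Con p.1 k p.2 = v)).card =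
      ((Finset.univ : Finset (Fin q × R)).filter
        (fun p => Con p.1 k' p.2 = v)).card) :
    (2 * m * d : ℝ) ≤ (q : ℝ) * (1 - (m : ℝ) / (g : ℝ)) := by
  have hq : 0 < q := by omega
  have : NeZero q := ⟨hq.ne'⟩
  have : Nontrivial (Fin m) := Fin.nontrivial_iff_two_le.mpr hm
  have hsecure : ∀ v k k', (AKC.signalRegion Con v k).Nonempty →
      (AKC.signalRegion Con v k').Nonempty := fun v k k' => by
    rw [AKC.signalRegion_nonempty_iff, AKC.signalRegion_nonempty_iff, ← card_pos, ← card_pos,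
      hsec v k k']
    exact id
  exact two_mul_mul_le_mul_one_sub_div (Nat.mul_pos (by omega) hq)
    ((card_le_univ _).trans_eq (Fintype.card_fin g))
    (AKC.mul_add_le_card_mul hcorrect hsecure ⟨0, by omega⟩)

/-- Efficiency upper bound for asymmetric key consensus: any
correct and secure AKC scheme with parameters (q,m,g,d) satisfies
2·m·d ≤ q·(1 − m/g). Security (the distribution of the signal Con(σ₁,k₁)
for uniform σ₁ does not depend on k₁) is expressed by counting. -/
theorem stmt_13 (q m g d : ℕ) (hm : 2 ≤ m) (hg : 2 ≤ g)
    (hmq : m ≤ q) (hgq : g ≤ q) (hd1 : 1 ≤ d) (hd : d ≤ q / 2)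
    (R : Type) [Fintype R] [Nonempty R]
    (Con : Fin q → Fin m → R → Fin g) (Rec : Fin q → Fin g → Fin m)
    (hcorrect : ∀ (σ₁ σ₂ : Fin q) (k : Fin m) (r : R),
      min (((σ₁.val : ℤ) - (σ₂.val : ℤ)) % (q : ℤ))
          ((q : ℤ) - ((σ₁.val : ℤ) - (σ₂.val : ℤ)) % (q : ℤ)) ≤ (d : ℤ) →
      Rec σ₂ (Con σ₁ k r) = k)
    (hsec : ∀ (v : Fin g) (k k' : Fin m),
      ((Finset.univ : Finset (Fin q × R)).filter
        (fun p => Con p.1 k p.2 = v)).card =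
      ((Finset.univ : Finset (Fin q × R)).filter
        (fun p => Con p.1 k' p.2 = v)).card) :
    (2 * m * d : ℝ) ≤ (q : ℝ) * (1 - (m : ℝ) / (g : ℝ)) :=
  stmt_13_general q m g d hm hmq R Con Rec hcorrect hsec
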